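/- arXiv:2203.09323 — 6 statements merged into one kernel-verified Lean document; each statement's English description precedes it below -/
import Mathlib

section
/- For all positive natural numbers m and n, the minimal number of monotonically increasing polyominoes needed to cover the lattice rectangle R_{m×n} equals min{m,n}. That is, R_{m×n} can be covered by min{m,n} increasing monotonous polyominoes, but not by fewer, since each increasing polyomino covers at most one of the antidiagonal cells (j, min{m,n}+1−j) for j = 1,…,min{m,n}. -/
/-- A monotonous polyomino in the lattice rectangle `R_{m×n}`, spanning columns
`r` to `s` (with `1 ≤ r ≤ s ≤ m`), encoded by a monotone function `P` taking
values in `{1,…,n}` on `{r-1,…,s}`. -/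
structure MonoPoly (m n : ℕ) where
  r : ℕ
  s : ℕ
  P : ℕ → ℕ
  one_le_r : 1 ≤ r
  r_le_s : r ≤ s
  s_le_m : s ≤ m
  val_mem : ∀ t, r - 1 ≤ t → t ≤ s → 1 ≤ P t ∧ P t ≤ n
  mono : (∀ t u, r - 1 ≤ t → t ≤ u → u ≤ s → P t ≤ P u) ∨
         (∀ t u, r - 1 ≤ t → t ≤ u → u ≤ s → P u ≤ P t)

/-- The cell set of a monotonous polyomino:
`{(t,j) : r ≤ t ≤ s, min(P(t-1),P(t)) ≤ j ≤ max(P(t-1),P(t))}`. -/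
def MonoPoly.cells {m n : ℕ} (Q : MonoPoly m n) : Set (ℕ × ℕ) :=
  {c | Q.r ≤ c.1 ∧ c.1 ≤ Q.s ∧
       min (Q.P (c.1 - 1)) (Q.P c.1) ≤ c.2 ∧
       c.2 ≤ max (Q.P (c.1 - 1)) (Q.P c.1)}

/-- A monotonous polyomino is increasing if its encoding function is
nondecreasing on `{r-1,…,s}`. -/
def MonoPoly.Increasing {m n : ℕ} (Q : MonoPoly m n) : Prop :=
  ∀ t u, Q.r - 1 ≤ t → t ≤ u → u ≤ Q.s → Q.P t ≤ Q.P u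

/-- A monotonous polyomino is decreasing if its encoding function is
nonincreasing on `{r-1,…,s}`. -/
def MonoPoly.Decreasing {m n : ℕ} (Q : MonoPoly m n) : Prop :=
  ∀ t u, Q.r - 1 ≤ t → t ≤ u → u ≤ Q.s → Q.P u ≤ Q.P t

/-- A monotonous polyomino is fully defined on `{0,…,m}` if `r = 1` and `s = m`. -/
def MonoPoly.Full {m n : ℕ} (Q : MonoPoly m n) : Prop :=
  Q.r = 1 ∧ Q.s = m

/-- `F` is a covering of `R_{m×n}` by `p` monotonous polyominoes: every cell
`(k,l)` with `1 ≤ k ≤ m`, `1 ≤ l ≤ n` belongs to some member of the family. -/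
def IsCovering (m n p : ℕ) (F : Fin p → MonoPoly m n) : Prop :=
  ∀ k l : ℕ, 1 ≤ k → k ≤ m → 1 ≤ l → l ≤ n → ∃ a, (k, l) ∈ (F a).cells

/-- An `(i,d)`-covering of `R_{m×n}`: `i` increasing and `d` decreasing
monotonous polyominoes whose cell sets together cover `{1,…,m}×{1,…,n}`. -/
def IsIDCovering (m n i d : ℕ) (F : Fin i → MonoPoly m n)
    (G : Fin d → MonoPoly m n) : Prop :=
  (∀ a, (F a).Increasing) ∧ (∀ b, (G b).Decreasing) ∧
  ∀ k l : ℕ, 1 ≤ k → k ≤ m → 1 ≤ l → l ≤ n →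
    (∃ a, (k, l) ∈ (F a).cells) ∨ (∃ b, (k, l) ∈ (G b).cells)

/-- The minimal number of monotonous polyominoes needed to cover `R_{m×n}`. -/
noncomputable def minCover (m n : ℕ) : ℕ :=
  sInf {p : ℕ | ∃ F : Fin p → MonoPoly m n, IsCovering m n p F}

/-- `m(n,i,d) ∈ ℕ∞`: the supremum of all `m` such that `R_{m×n}` admits an
`(i,d)`-covering. -/
noncomputable def mSup (n i d : ℕ) : ℕ∞ :=
  ⨆ m ∈ {m : ℕ | ∃ (F : Fin i → MonoPoly m n) (G : Fin d → MonoPoly m n),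
      IsIDCovering m n i d F G}, (m : ℕ∞)

/-- `f : ℕ → ℕ` encodes an increasing monotonous polyomino in `R_{m×n}` fully
defined on `{0,…,m}`: values in `{1,…,n}` and nondecreasing on `{0,…,m}`. -/
def IncFull (m n : ℕ) (f : ℕ → ℕ) : Prop :=
  (∀ t, t ≤ m → 1 ≤ f t ∧ f t ≤ n) ∧ (∀ t u, t ≤ u → u ≤ m → f t ≤ f u)

/-- The cell set of an increasing polyomino fully defined on `{0,…,m}`,
encoded by the nondecreasing function `f`. -/
def cellsFull (m : ℕ) (f : ℕ → ℕ) : Set (ℕ × ℕ) :=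
  {c | 1 ≤ c.1 ∧ c.1 ≤ m ∧ f (c.1 - 1) ≤ c.2 ∧ c.2 ≤ f c.1}

/-!
Covering by the `m` columns or by the `n` rows shows that `min m n` increasing polyominoes
suffice. Conversely, an increasing polyomino cannot contain two cells of which the one further
right lies strictly lower, so it meets at most one cell of the antidiagonal
`(j, min m n + 1 - j)`, `1 ≤ j ≤ min m n`; hence a covering needs `min m n` of them.
-/

namespace MonoPoly

lemma Increasing.le_of_mem_cells {m n : ℕ} {Q : MonoPoly m n} (hQ : Q.Increasing)
    {k l k' l' : ℕ} (h : (k, l) ∈ Q.cells) (h' : (k', l') ∈ Q.cells) (hk : k < k') :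
    l ≤ l' := by
  obtain ⟨hr, hs, -, hl⟩ := h
  obtain ⟨hr', hs', hl', -⟩ := h'
  have := Q.one_le_r
  have e₁ : Q.P (k - 1) ≤ Q.P k := hQ _ _ (by omega) (by omega) hs
  have e₂ : Q.P k ≤ Q.P (k' - 1) := hQ _ _ (by omega) (by omega) (by omega)
  have e₃ : Q.P (k' - 1) ≤ Q.P k' := hQ _ _ (by omega) (by omega) hs'
  simp only [min_def, max_def] at hl hl'
  split_ifs at hl hl' <;> omega

/-- The full column `{k} × {1,…,n}`, as the jump of `P` from `1` to `n` at `k`. -/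
def column (m n k : ℕ) (hk : 1 ≤ k) (hkm : k ≤ m) (hn : 1 ≤ n) : MonoPoly m n where
  r := k
  s := k
  P t := if t < k then 1 else n
  one_le_r := hk
  r_le_s := le_rfl
  s_le_m := hkm
  val_mem _ _ _ := by split_ifs <;> omega
  mono := Or.inl fun _ _ _ _ _ => by split_ifs <;> omega

lemma column_increasing {m n k : ℕ} (hk : 1 ≤ k) (hkm : k ≤ m) (hn : 1 ≤ n) :
    (column m n k hk hkm hn).Increasing := by
  intro t u _ _ _
  simp only [column]
  split_ifs <;> omega

lemma mem_column_cells {m n k l : ℕ} (hk : 1 ≤ k) (hkm : k ≤ m) (hn : 1 ≤ n)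
    (hl : 1 ≤ l) (hln : l ≤ n) : (k, l) ∈ (column m n k hk hkm hn).cells := by
  simp only [cells, column, Set.mem_ofPred_eq]
  split_ifs <;> omega

def row (m n l : ℕ) (hm : 1 ≤ m) (hl : 1 ≤ l) (hln : l ≤ n) : MonoPoly m n where
  r := 1
  s := m
  P _ := l
  one_le_r := le_rfl
  r_le_s := hm
  s_le_m := le_rfl
  val_mem _ _ _ := ⟨hl, hln⟩
  mono := Or.inl fun _ _ _ _ _ => le_rfl

lemma row_increasing {m n l : ℕ} (hm : 1 ≤ m) (hl : 1 ≤ l) (hln : l ≤ n) :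
    (row m n l hm hl hln).Increasing :=
  fun _ _ _ _ _ => le_rfl

lemma mem_row_cells {m n k l : ℕ} (hm : 1 ≤ m) (hl : 1 ≤ l) (hln : l ≤ n)
    (hk : 1 ≤ k) (hkm : k ≤ m) : (k, l) ∈ (row m n l hm hl hln).cells := by
  simp only [cells, row, Set.mem_ofPred_eq, min_self, max_self]
  omega

end MonoPoly

open MonoPoly

lemma exists_increasing_covering_columns (m : ℕ) {n : ℕ} (hn : 1 ≤ n) :
    ∃ F : Fin m → MonoPoly m n, (∀ a, (F a).Increasing) ∧ IsCovering m n m F :=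
  ⟨fun a => column m n (a + 1) (by omega) a.isLt hn,
    fun a => column_increasing _ _ hn,
    fun k _ hk hkm hl hln => ⟨⟨k - 1, by omega⟩, by
      simpa [Nat.sub_add_cancel hk] using mem_column_cells (by omega) (by omega) hn hl hln⟩⟩

lemma exists_increasing_covering_rows {m : ℕ} (hm : 1 ≤ m) (n : ℕ) :
    ∃ F : Fin n → MonoPoly m n, (∀ a, (F a).Increasing) ∧ IsCovering m n n F :=
  ⟨fun b => row m n (b + 1) hm (by omega) b.isLt,
    fun b => row_increasing hm _ _,
    fun k l hk hkm hl _ => ⟨⟨l - 1, by omega⟩, by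
      simpa [Nat.sub_add_cancel hl] using mem_row_cells hm (by omega) (by omega) hk hkm⟩⟩

lemma le_of_increasing_covering {m n p q : ℕ} {F : Fin p → MonoPoly m n}
    (hinc : ∀ a, (F a).Increasing) (hcov : IsCovering m n p F) (hqm : q ≤ m) (hqn : q ≤ n) :
    q ≤ p := by
  have hdiag : ∀ j : Fin q, ∃ a, (j.val + 1, q - j.val) ∈ (F a).cells := fun j =>
    hcov _ _ (by omega) (by omega) (by omega) (by omega)
  choose g hg using hdiag
  suffices Function.Injective g by simpa using Fintype.card_le_of_injective g this
  intro j j' hjj'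
  by_contra hne
  rcases lt_or_gt_of_ne (Fin.val_ne_of_ne hne) with hlt | hlt
  · have := (hinc _).le_of_mem_cells (hjj' ▸ hg j) (hg j') (by omega)
    omega
  · have := (hinc _).le_of_mem_cells (hjj' ▸ hg j') (hg j) (by omega)
    omega

/-- For positive `m, n`, the minimal number of increasing monotonous
polyominoes needed to cover `R_{m×n}` equals `min m n`. -/
theorem stmt5 (m n : ℕ) (hm : 1 ≤ m) (hn : 1 ≤ n) :
    IsLeast {p : ℕ | ∃ F : Fin p → MonoPoly m n,
      (∀ a, (F a).Increasing) ∧ IsCovering m n p F} (min m n) := by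
  refine ⟨?_, fun p ⟨F, hinc, hcov⟩ =>
    le_of_increasing_covering hinc hcov (min_le_left m n) (min_le_right m n)⟩
  rcases min_choice m n with h | h <;> rw [h]
  · exact exists_increasing_covering_columns m hn
  · exact exists_increasing_covering_rows hm n
end

section
/- Let m, n, i be positive natural numbers and let I_1, …, I_i be increasing monotonous polyominoes in R_{m×n}. Then there exist mutually distinct increasing monotonous polyominoes I⁰, I¹, …, I^{i₁} in R_{m×n} with 0 ≤ i₁ < i, all fully defined on {0,…,m}, such that the union of the cell sets of I_1,…,I_i is contained in the union of the cell sets of I⁰, I¹, …, I^{i₁}, and moreover I^k(m) < I⁰(m) for every k = 1,…,i₁ (so the cell sets of I¹,…,I^{i₁} are contained in {1,…,m}×{1,…,I⁰(m)−1}). -/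
/-!
Extend every `I_a` to a nondecreasing boundary `f_a` on `{0,…,m}`, constant outside its span,
and replace the family `(f_a)` by its pointwise order statistics `g_0 ≤ ⋯ ≤ g_{i-1}`. These are
again nondecreasing, and a cell `(t, c)` with `f_a(t-1) ≤ c ≤ f_a(t)` lies between `g_j(t-1)` and
`g_j(t)` for `j = #{b | f_b(t) < c}`. Take `I⁰ = g_{i-1}` and cap the other `g_j` at `I⁰(m) - 1`:
a cell of `g_j` with `c ≥ I⁰(m)` lies in `I⁰`, because `I⁰(t-1) ≤ I⁰(m) ≤ c ≤ g_j(t) ≤ I⁰(t)`.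
Removing duplicates among the at most `i - 1` capped boundaries gives the family.
-/

open Finset

lemma cellsFull_congr {m : ℕ} {f g : ℕ → ℕ} (h : Set.EqOn f g (Set.Iic m)) :
    cellsFull m f = cellsFull m g := by
  ext c
  simp only [cellsFull, Set.mem_ofPred_eq]
  constructor <;> rintro ⟨h1, h2, h3, h4⟩ <;>
    rw [← h (show c.1 - 1 ∈ Set.Iic m from Set.mem_Iic.2 (by omega))] at * <;>
    rw [← h (show c.1 ∈ Set.Iic m from h2)] at * <;> exact ⟨h1, h2, h3, h4⟩

lemma IncFull.min_const {m n v : ℕ} {g : ℕ → ℕ} (hg : IncFull m n g) (hv : 1 ≤ v) :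
    IncFull m n (fun t => min (g t) v) :=
  ⟨fun t ht => ⟨le_min (hg.1 t ht).1 hv, (min_le_left _ _).trans (hg.1 t ht).2⟩,
    fun t u htu hu => min_le_min_right v (hg.2 t u htu hu)⟩

lemma mem_cellsFull_or_mem_cellsFull_min {m n : ℕ} {g T : ℕ → ℕ} {c : ℕ × ℕ}
    (hg : IncFull m n g) (hT : IncFull m n T) (hgT : ∀ t ≤ m, g t ≤ T t)
    (hc : c ∈ cellsFull m g) :
    c ∈ cellsFull m T ∨ 2 ≤ T m ∧ c ∈ cellsFull m (fun t => min (g t) (T m - 1)) := by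
  obtain ⟨h1, h2, h3, h4⟩ := hc
  have hlow := (hg.1 (c.1 - 1) (by omega)).1
  by_cases hcap : c.2 ≤ T m - 1
  · exact .inr ⟨by omega, h1, h2, (min_le_left _ _).trans h3, le_min h4 hcap⟩
  · have hTm := hT.2 (c.1 - 1) m (by omega) le_rfl
    exact .inl ⟨h1, h2, by omega, h4.trans (hgT c.1 h2)⟩

section OrderStat

variable {ι : Type*} [Fintype ι]

/-- The `j`-th smallest value (counting from `0`, with multiplicity) of a finite family. -/
noncomputable def orderStat (x : ι → ℕ) (j : ℕ) : ℕ :=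
  sInf {v | j < #{b | x b ≤ v}}

lemma orderStat_le_iff (x : ι → ℕ) {j : ℕ} (hj : j < Fintype.card ι) (v : ℕ) :
    orderStat x j ≤ v ↔ j < #{b | x b ≤ v} := by
  have hmono : ∀ {v w : ℕ}, v ≤ w → j < #{b | x b ≤ v} → j < #{b | x b ≤ w} :=
    fun hvw h => h.trans_le (card_le_card fun b hb => by
      simp only [mem_filter, mem_univ, true_and] at hb ⊢
      exact hb.trans hvw)
  have hne : {v | j < #{b | x b ≤ v}}.Nonempty :=
    ⟨univ.sup x, by simpa [filter_true_of_mem fun b _ => le_sup (f := x) (mem_univ b)] using hj⟩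
  exact ⟨fun h => hmono h (Nat.sInf_mem hne), fun h => Nat.sInf_le h⟩

lemma lt_card_le_orderStat (x : ι → ℕ) {j : ℕ} (hj : j < Fintype.card ι) :
    j < #{b | x b ≤ orderStat x j} :=
  (orderStat_le_iff x hj _).1 le_rfl

lemma orderStat_le_orderStat {x y : ι → ℕ} (hxy : ∀ b, x b ≤ y b) {j : ℕ}
    (hj : j < Fintype.card ι) : orderStat x j ≤ orderStat y j :=
  (orderStat_le_iff x hj _).2 <| (lt_card_le_orderStat y hj).trans_le <|
    card_le_card fun b hb => by
      simp only [mem_filter, mem_univ, true_and] at hb ⊢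
      exact (hxy b).trans hb

lemma orderStat_mono_index (x : ι → ℕ) {j k : ℕ} (hjk : j ≤ k) (hk : k < Fintype.card ι) :
    orderStat x j ≤ orderStat x k :=
  (orderStat_le_iff x (hjk.trans_lt hk) _).2 (hjk.trans_lt (lt_card_le_orderStat x hk))

lemma orderStat_mem_Icc {x : ι → ℕ} {j lo hi : ℕ} (hj : j < Fintype.card ι)
    (hx : ∀ b, x b ∈ Set.Icc lo hi) : orderStat x j ∈ Set.Icc lo hi := by
  obtain ⟨b, hb⟩ := card_pos.1 ((Nat.zero_le j).trans_lt (lt_card_le_orderStat x hj))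
  refine ⟨(hx b).1.trans (mem_filter.1 hb).2, (orderStat_le_iff x hj hi).2 ?_⟩
  rwa [filter_true_of_mem fun b _ => (hx b).2, card_univ]

lemma exists_orderStat_le_le {x y : ι → ℕ} (hxy : ∀ b, x b ≤ y b) {a : ι} {c : ℕ}
    (hxa : x a ≤ c) (hya : c ≤ y a) :
    ∃ j < Fintype.card ι, orderStat x j ≤ c ∧ c ≤ orderStat y j := by
  have ha : a ∉ ({b | y b < c} : Finset ι) := by simp [hya]
  have hj : #{b | y b < c} < Fintype.card ι := card_lt_univ_of_notMem ha
  refine ⟨_, hj, (orderStat_le_iff x hj c).2 (card_lt_card ?_), ?_⟩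
  · refine (ssubset_iff_of_subset fun b hb => ?_).2 ⟨a, by simpa using hxa, ha⟩
    simp only [mem_filter, mem_univ, true_and] at hb ⊢
    exact (hxy b).trans hb.le
  · by_contra! hlt
    refine (lt_card_le_orderStat y hj).not_ge (card_le_card fun b hb => ?_)
    simp only [mem_filter, mem_univ, true_and] at hb ⊢
    exact hb.trans_lt hlt

variable {m n : ℕ} {f : ι → ℕ → ℕ}

lemma incFull_orderStat (hf : ∀ b, IncFull m n (f b)) {j : ℕ} (hj : j < Fintype.card ι) :
    IncFull m n (fun t => orderStat (f · t) j) :=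
  ⟨fun t ht => orderStat_mem_Icc hj fun b => (hf b).1 t ht,
    fun t u htu hu => orderStat_le_orderStat (fun b => (hf b).2 t u htu hu) hj⟩

lemma exists_mem_cellsFull_orderStat (hf : ∀ b, IncFull m n (f b)) {a : ι} {c : ℕ × ℕ}
    (hc : c ∈ cellsFull m (f a)) :
    ∃ j < Fintype.card ι, c ∈ cellsFull m (fun t => orderStat (f · t) j) := by
  obtain ⟨h1, h2, h3, h4⟩ := hc
  obtain ⟨j, hj, hx, hy⟩ :=
    exists_orderStat_le_le (fun b => (hf b).2 (c.1 - 1) c.1 (by omega) h2) h3 h4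
  exact ⟨j, hj, h1, h2, hx, hy⟩

end OrderStat

namespace MonoPoly

variable {m n : ℕ}

def extend (Q : MonoPoly m n) (t : ℕ) : ℕ :=
  Q.P (min (max t (Q.r - 1)) Q.s)

lemma Increasing.incFull_extend {Q : MonoPoly m n} (hQ : Q.Increasing) : IncFull m n Q.extend := by
  have hr := Q.r_le_s
  refine ⟨fun t _ => Q.val_mem _ (by omega) (min_le_right _ _), fun t u htu _ => ?_⟩
  exact hQ _ _ (by omega) (by omega) (min_le_right _ _)

lemma Increasing.cells_subset_cellsFull_extend {Q : MonoPoly m n} (hQ : Q.Increasing) :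
    Q.cells ⊆ cellsFull m Q.extend := by
  rintro c ⟨h1, h2, h3, h4⟩
  have hr := Q.one_le_r
  have hP : Q.P (c.1 - 1) ≤ Q.P c.1 := hQ _ _ (by omega) (Nat.sub_le _ _) h2
  rw [min_eq_left hP] at h3
  rw [max_eq_right hP] at h4
  refine ⟨hr.trans h1, h2.trans Q.s_le_m, ?_, ?_⟩
  · rwa [extend, show min (max (c.1 - 1) (Q.r - 1)) Q.s = c.1 - 1 by omega]
  · rwa [extend, show min (max c.1 (Q.r - 1)) Q.s = c.1 by omega]

end MonoPoly

lemma Finset.exists_fin_transversal {α β : Type*} [DecidableEq β] (ρ : α → β) (S : Finset α) :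
    ∃ k ≤ #S, ∃ e : Fin k → α, (∀ a, e a ∈ S) ∧ Function.Injective (ρ ∘ e) ∧
      ∀ x ∈ S, ∃ a, ρ (e a) = ρ x := by
  choose pre hpreS hpre using fun y (hy : y ∈ S.image ρ) => mem_image.1 hy
  let E := (S.image ρ).equivFin.symm
  refine ⟨_, card_image_le, fun a => pre _ (E a).2, fun a => hpreS _ _, fun a b hab => ?_,
    fun x hx => ⟨E.symm ⟨ρ x, mem_image_of_mem ρ hx⟩, by simp [hpre]⟩⟩
  simp only [Function.comp_apply, hpre] at hab
  exact E.injective (Subtype.ext hab)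

lemma exists_cons_transversal {m n : ℕ} {T : ℕ → ℕ} (hT : IncFull m n T) (S : Finset (ℕ → ℕ))
    (hS : ∀ h ∈ S, IncFull m n h ∧ h m < T m) :
    ∃ k ≤ #S, ∃ Q : Fin (k + 1) → ℕ → ℕ, Q 0 = T ∧ (∀ a, IncFull m n (Q a)) ∧
      (∀ a b, a ≠ b → ∃ t, t ≤ m ∧ Q a t ≠ Q b t) ∧ (∀ a : Fin (k + 1), a ≠ 0 → Q a m < Q 0 m) ∧
      ∀ h ∈ S, ∃ a, Set.EqOn (Q a) h (Set.Iic m) := by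
  classical
  obtain ⟨k, hk, e, heS, hinj, hsurj⟩ := S.exists_fin_transversal (Set.Iic m).domRestrict
  have hlt : ∀ a, e a m < T m := fun a => (hS _ (heS a)).2
  refine ⟨k, hk, Fin.cons T e, rfl, Fin.cases hT fun a => (hS _ (heS a)).1, ?_,
    Fin.cases (by simp) fun a _ => by simpa using hlt a, fun h hh => ?_⟩
  · intro a b hab
    induction a using Fin.cases <;> induction b using Fin.cases
    · exact absurd rfl hab
    · exact ⟨m, le_rfl, by simpa using (hlt _).ne'⟩
    · exact ⟨m, le_rfl, by simpa using (hlt _).ne⟩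
    · obtain ⟨⟨t, ht⟩, hne⟩ := Function.ne_iff.1 (hinj.ne fun h => hab (congrArg _ h))
      exact ⟨t, ht, by simpa [Set.domRestrict] using hne⟩
  · obtain ⟨a, ha⟩ := hsurj h hh
    exact ⟨a.succ, by simpa using Set.domRestrict_eq_domRestrict_iff.1 ha⟩

theorem stmt6_general (m n i : ℕ) (hi : 1 ≤ i)
    (I : Fin i → MonoPoly m n) (hI : ∀ a, (I a).Increasing) :
    ∃ i₁ : ℕ, i₁ < i ∧ ∃ Q : Fin (i₁ + 1) → (ℕ → ℕ),
      (∀ a, IncFull m n (Q a)) ∧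
      (∀ a b, a ≠ b → ∃ t, t ≤ m ∧ Q a t ≠ Q b t) ∧
      ((⋃ a, (I a).cells) ⊆ ⋃ a, cellsFull m (Q a)) ∧
      (∀ a : Fin (i₁ + 1), a ≠ 0 → Q a m < Q 0 m) := by
  classical
  have hf : ∀ a, IncFull m n (I a).extend := fun a => (hI a).incFull_extend
  set g : ℕ → ℕ → ℕ := fun j t => orderStat (fun b => (I b).extend t) j
  have hg : ∀ j < i, IncFull m n (g j) := fun j hj => incFull_orderStat hf (by simpa using hj)
  have hT := hg (i - 1) (by omega)
  set cap : ℕ → ℕ → ℕ := fun j t => min (g j t) (g (i - 1) m - 1)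
  obtain ⟨k, hk, Q, hQ0, hQ, hQne, hQlt, hQS⟩ :=
    exists_cons_transversal hT ({j ∈ range (i - 1) | IncFull m n (cap j)}.image cap) <| by
      simp only [mem_image, mem_filter]
      rintro _ ⟨j, ⟨-, hj⟩, rfl⟩
      exact ⟨hj, by have := (hT.1 m le_rfl).1; simp only [cap]; omega⟩
  refine ⟨k, hk.trans_lt ((card_image_le.trans (card_filter_le _ _)).trans_lt
    (by simp; omega)), Q, hQ, hQne, ?_, hQlt⟩
  simp only [Set.iUnion_subset_iff]
  intro a c hc
  obtain ⟨j, hj, hcj⟩ :=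
    exists_mem_cellsFull_orderStat hf ((hI a).cells_subset_cellsFull_extend hc)
  rw [Fintype.card_fin] at hj
  have hjT : ∀ t ≤ m, g j t ≤ g (i - 1) t :=
    fun t _ => orderStat_mono_index _ (by omega) (by simp; omega)
  rcases mem_cellsFull_or_mem_cellsFull_min (hg j hj) hT hjT hcj with hc0 | ⟨hV, hcap⟩
  · exact Set.mem_iUnion.2 ⟨0, hQ0 ▸ hc0⟩
  obtain rfl | hj' : j = i - 1 ∨ j < i - 1 := by omega
  · exact Set.mem_iUnion.2 ⟨0, hQ0 ▸ hcj⟩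
  obtain ⟨b, hb⟩ := hQS (cap j) (mem_image_of_mem _ (mem_filter.2
    ⟨mem_range.2 hj', (hg j hj).min_const (by omega)⟩))
  exact Set.mem_iUnion.2 ⟨b, cellsFull_congr hb ▸ hcap⟩

/-- Given increasing polyominoes `I₁,…,I_i ⊆ R_{m×n}`, there are mutually
distinct increasing polyominoes `I⁰,…,I^{i₁}` (with `i₁ < i`), fully defined on
`{0,…,m}`, covering all of them, with `I^k(m) < I⁰(m)` for `k = 1,…,i₁`. -/
theorem stmt6 (m n i : ℕ) (hm : 1 ≤ m) (hn : 1 ≤ n) (hi : 1 ≤ i)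
    (I : Fin i → MonoPoly m n) (hI : ∀ a, (I a).Increasing) :
    ∃ i₁ : ℕ, i₁ < i ∧ ∃ Q : Fin (i₁ + 1) → (ℕ → ℕ),
      (∀ a, IncFull m n (Q a)) ∧
      (∀ a b, a ≠ b → ∃ t, t ≤ m ∧ Q a t ≠ Q b t) ∧
      ((⋃ a, (I a).cells) ⊆ ⋃ a, cellsFull m (Q a)) ∧
      (∀ a : Fin (i₁ + 1), a ≠ 0 → Q a m < Q 0 m) :=
  stmt6_general m n i hi I hI
end

section
/- Let I, J : {0,…,m} → {1,…,n} be nondecreasing functions encoding increasing monotonous polyominoes in R_{m×n} with I(m) ≠ J(m). Define L, U : {0,…,m} → {1,…,n} by L(k) := min{I(k), J(k)}, U(m) := max{I(m), J(m)}, and U(k) := max{I(k), J(k), min{I(k+1), J(k+1)} + 1} for k < m. Then: (i) L and U are nondecreasing (so they encode increasing monotonous polyominoes fully defined on {0,…,m}); (ii) the union of the cell sets of I and J is contained in the union of the cell sets of L and U, which in turn lies in {1,…,m}×{1,…,n}; (iii) L(k) < U(k−1) for k = 1,…,m, so the cell sets of L and U are disjoint and L lies strictly below U. -/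
/-! The key estimate is `min (I k) (J k) < U k` for every `k ≤ m`: for `k < m` it comes from
the summand `min (I (k + 1)) (J (k + 1)) + 1` of `U k`, for `k = m` from `I m ≠ J m`. It makes `U`
nondecreasing, while `L k < U (k - 1)` holds because `U (k - 1)` contains the summand
`min (I k) (J k) + 1`; this strict inequality is what keeps the cells of `L` and `U` apart. -/

open Set

structure IsMerge (m : ℕ) (I J L U : ℕ → ℕ) : Prop where
  lower_eq : ∀ k, k ≤ m → L k = min (I k) (J k)
  upper_last : U m = max (I m) (J m)
  upper_eq : ∀ k, k < m → U k = max (max (I k) (J k)) (min (I (k + 1)) (J (k + 1)) + 1)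

section CellsFull

variable {m n : ℕ} {f g : ℕ → ℕ}

lemma mem_cellsFull {k j : ℕ} :
    (k, j) ∈ cellsFull m f ↔ 1 ≤ k ∧ k ≤ m ∧ f (k - 1) ≤ j ∧ j ≤ f k :=
  Iff.rfl

lemma IncFull.monotoneOn (hf : IncFull m n f) : MonotoneOn f (Iic m) :=
  fun t _ u hu htu => hf.2 t u htu hu

lemma incFull_of_monotoneOn (hf : MonotoneOn f (Iic m)) (h0 : 1 ≤ f 0) (hm : f m ≤ n) :
    IncFull m n f :=
  ⟨fun t ht => ⟨h0.trans (hf (Nat.zero_le m) ht (Nat.zero_le t)), (hf ht self_mem_Iic ht).trans hm⟩,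
    fun _ _ htu hu => hf (htu.trans hu) hu htu⟩

lemma IncFull.cellsFull_subset (hf : IncFull m n f) :
    cellsFull m f ⊆ {c : ℕ × ℕ | 1 ≤ c.1 ∧ c.1 ≤ m ∧ 1 ≤ c.2 ∧ c.2 ≤ n} := by
  rintro ⟨k, j⟩ ⟨h1, hm, hlo, hhi⟩
  exact ⟨h1, hm, (hf.1 (k - 1) (by omega)).1.trans hlo, hhi.trans (hf.1 k hm).2⟩

lemma disjoint_cellsFull_of_lt_pred (h : ∀ k, 1 ≤ k → k ≤ m → f k < g (k - 1)) :
    Disjoint (cellsFull m f) (cellsFull m g) := by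
  rw [disjoint_left]
  rintro ⟨k, j⟩ ⟨h1, hm, -, hf⟩ ⟨-, -, hg, -⟩
  exact absurd (h k h1 hm) (not_lt.2 (hg.trans hf))

end CellsFull

namespace IsMerge

variable {m n : ℕ} {I J L U : ℕ → ℕ}

lemma symm (h : IsMerge m I J L U) : IsMerge m J I L U where
  lower_eq k hk := by rw [h.lower_eq k hk, min_comm]
  upper_last := by rw [h.upper_last, max_comm]
  upper_eq k hk := by rw [h.upper_eq k hk, max_comm (I k), min_comm]

lemma max_le_upper (h : IsMerge m I J L U) {k : ℕ} (hk : k ≤ m) : max (I k) (J k) ≤ U k := by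
  rcases hk.lt_or_eq with hk | rfl
  · rw [h.upper_eq k hk]; exact le_max_left _ _
  · rw [h.upper_last]

lemma min_lt_upper (h : IsMerge m I J L U) (hI : MonotoneOn I (Iic m))
    (hJ : MonotoneOn J (Iic m)) (hne : I m ≠ J m) {k : ℕ} (hk : k ≤ m) :
    min (I k) (J k) < U k := by
  rcases hk.lt_or_eq with hk | rfl
  · have hmin : min (I k) (J k) ≤ min (I (k + 1)) (J (k + 1)) :=
      (hI.min hJ) hk.le (show k + 1 ≤ m from hk) (k.le_add_right 1)
    rw [h.upper_eq k hk]
    exact Nat.lt_succ_of_le hmin |>.trans_le (le_max_right _ _)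
  · rw [h.upper_last]; exact min_lt_max.2 hne

lemma upper_le_upper_succ (h : IsMerge m I J L U) (hI : MonotoneOn I (Iic m))
    (hJ : MonotoneOn J (Iic m)) (hne : I m ≠ J m) {k : ℕ} (hk : k < m) :
    U k ≤ U (k + 1) := by
  have hmax := h.max_le_upper (k := k + 1) hk
  have hmin := h.min_lt_upper hI hJ hne (k := k + 1) hk
  have hIk := hI hk.le (show k + 1 ≤ m from hk) (k.le_add_right 1)
  have hJk := hJ hk.le (show k + 1 ≤ m from hk) (k.le_add_right 1)
  rw [h.upper_eq k hk]
  omega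

lemma lower_incFull (h : IsMerge m I J L U) (hI : IncFull m n I) (hJ : IncFull m n J) :
    IncFull m n L := by
  have hmono : MonotoneOn L (Iic m) :=
    (hI.monotoneOn.min hJ.monotoneOn).congr fun k hk => (h.lower_eq k hk).symm
  refine incFull_of_monotoneOn hmono ?_ ?_
  · rw [h.lower_eq 0 (Nat.zero_le m)]
    exact le_min (hI.1 0 (Nat.zero_le m)).1 (hJ.1 0 (Nat.zero_le m)).1
  · rw [h.lower_eq m le_rfl]
    exact min_le_of_left_le (hI.1 m le_rfl).2

lemma upper_incFull (h : IsMerge m I J L U) (hI : IncFull m n I) (hJ : IncFull m n J)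
    (hne : I m ≠ J m) : IncFull m n U := by
  have hmono : MonotoneOn U (Iic m) := monotoneOn_of_le_succ ordConnected_Iic
    fun k _ _ hk => h.upper_le_upper_succ hI.monotoneOn hJ.monotoneOn hne hk
  refine incFull_of_monotoneOn hmono ?_ ?_
  · exact (hI.1 0 (Nat.zero_le m)).1.trans
      ((le_max_left _ _).trans (h.max_le_upper (Nat.zero_le m)))
  · rw [h.upper_last]
    exact max_le (hI.1 m le_rfl).2 (hJ.1 m le_rfl).2

lemma lower_lt_upper_pred (h : IsMerge m I J L U) :
    ∀ k, 1 ≤ k → k ≤ m → L k < U (k - 1) := by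
  intro k h1 hm
  have hU := h.upper_eq (k - 1) (by omega)
  rw [Nat.sub_add_cancel h1] at hU
  rw [h.lower_eq k hm, hU]
  omega

/-- A cell `(k, j)` of `I` with `min (I k) (J k) < j` has `J k < j`, so each of the three terms
of `U (k - 1)` is at most `j`. -/
lemma cellsFull_subset_union (h : IsMerge m I J L U) (hJ : MonotoneOn J (Iic m)) :
    cellsFull m I ⊆ cellsFull m L ∪ cellsFull m U := by
  rintro ⟨k, j⟩ hc
  obtain ⟨h1, hm, hlo, hhi⟩ := mem_cellsFull.1 hc
  rw [mem_union, mem_cellsFull, mem_cellsFull]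
  have hLpred := h.lower_eq (k - 1) (by omega)
  have hUpred := h.upper_eq (k - 1) (by omega)
  rw [Nat.sub_add_cancel h1] at hUpred
  have hJpred := hJ (show k - 1 ≤ m by omega) hm (Nat.sub_le k 1)
  by_cases hj : j ≤ min (I k) (J k)
  · left
    exact ⟨h1, hm, by omega, hj.trans (h.lower_eq k hm).ge⟩
  · right
    exact ⟨h1, hm, by omega, hhi.trans ((le_max_left _ _).trans (h.max_le_upper hm))⟩

end IsMerge

theorem stmt8_general (m n : ℕ)
    (I J : ℕ → ℕ) (hI : IncFull m n I) (hJ : IncFull m n J)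
    (hne : I m ≠ J m) (L U : ℕ → ℕ)
    (hL : ∀ k, k ≤ m → L k = min (I k) (J k))
    (hUm : U m = max (I m) (J m))
    (hU : ∀ k, k < m → U k = max (max (I k) (J k)) (min (I (k + 1)) (J (k + 1)) + 1)) :
    (IncFull m n L ∧ IncFull m n U) ∧
    (cellsFull m I ∪ cellsFull m J ⊆ cellsFull m L ∪ cellsFull m U ∧
      cellsFull m L ∪ cellsFull m U ⊆
        {c : ℕ × ℕ | 1 ≤ c.1 ∧ c.1 ≤ m ∧ 1 ≤ c.2 ∧ c.2 ≤ n}) ∧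
    ((∀ k, 1 ≤ k → k ≤ m → L k < U (k - 1)) ∧
      Disjoint (cellsFull m L) (cellsFull m U)) := by
  have hM : IsMerge m I J L U := ⟨hL, hUm, hU⟩
  have hLinc := hM.lower_incFull hI hJ
  have hUinc := hM.upper_incFull hI hJ hne
  exact ⟨⟨hLinc, hUinc⟩,
    ⟨union_subset (hM.cellsFull_subset_union hJ.monotoneOn)
        (hM.symm.cellsFull_subset_union hI.monotoneOn),
      union_subset hLinc.cellsFull_subset hUinc.cellsFull_subset⟩,
    hM.lower_lt_upper_pred, disjoint_cellsFull_of_lt_pred hM.lower_lt_upper_pred⟩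

/-- Lemma on merging two increasing polyominoes: for nondecreasing
`I, J : {0,…,m} → {1,…,n}` with `I(m) ≠ J(m)`, the functions `L` and `U`
defined below are nondecreasing, cover `I ∪ J` inside `R_{m×n}`, and `L` lies
strictly below `U` without overlap. -/
theorem stmt8 (m n : ℕ) (hm : 1 ≤ m) (hn : 1 ≤ n)
    (I J : ℕ → ℕ) (hI : IncFull m n I) (hJ : IncFull m n J)
    (hne : I m ≠ J m) (L U : ℕ → ℕ)
    (hL : ∀ k, k ≤ m → L k = min (I k) (J k))
    (hUm : U m = max (I m) (J m))
    (hU : ∀ k, k < m → U k = max (max (I k) (J k)) (min (I (k + 1)) (J (k + 1)) + 1)) :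
    (IncFull m n L ∧ IncFull m n U) ∧
    (cellsFull m I ∪ cellsFull m J ⊆ cellsFull m L ∪ cellsFull m U ∧
      cellsFull m L ∪ cellsFull m U ⊆
        {c : ℕ × ℕ | 1 ≤ c.1 ∧ c.1 ≤ m ∧ 1 ≤ c.2 ∧ c.2 ≤ n}) ∧
    ((∀ k, 1 ≤ k → k ≤ m → L k < U (k - 1)) ∧
      Disjoint (cellsFull m L) (cellsFull m U)) :=
  stmt8_general m n I J hI hJ hne L U hL hUm hU
end

section
/- Let n, i, d be natural numbers with i + d < n. If the lattice rectangle R_{m×n} admits an (i,d)-covering, then m·(n − (i+d)) ≤ (i+d)·(n−1); in particular the set of all m for which R_{m×n} admits an (i,d)-covering is bounded. -/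
/-! Each cell of a monotonous polyomino lies on its own antidiagonal `k + j = const` if the
polyomino is increasing, and on its own diagonal `k - j = const` if it is decreasing. The
rectangle `R_{m×n}` has only `m + n - 1` of each, so `i + d` polyominoes cover at most
`(i + d)(m + n - 1)` of its `m n` cells. -/

open Finset

theorem card_le_of_forall_lt_imp_le {m n : ℕ} {S : Finset (ℕ × ℕ)}
    (hS : S ⊆ Icc 1 m ×ˢ Icc 1 n) (hmono : ∀ c ∈ S, ∀ c' ∈ S, c.1 < c'.1 → c.2 ≤ c'.2) :
    #S ≤ m + n - 1 := by
  have hmaps : Set.MapsTo (fun c : ℕ × ℕ => c.1 + c.2) S (Icc 2 (m + n)) := by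
    intro c hc
    have := mem_product.1 (hS hc)
    simp only [mem_Icc, coe_Icc, Set.mem_Icc] at this ⊢
    omega
  have hinj : Set.InjOn (fun c : ℕ × ℕ => c.1 + c.2) S := by
    rintro ⟨k, j⟩ hc ⟨k', j'⟩ hc' (heq : k + j = k' + j')
    have := hmono _ hc _ hc'
    have := hmono _ hc' _ hc
    simp only [Prod.mk.injEq] at *
    omega
  simpa using card_le_card_of_injOn _ hmaps hinj

theorem card_le_of_forall_lt_imp_ge {m n : ℕ} {S : Finset (ℕ × ℕ)}
    (hS : S ⊆ Icc 1 m ×ˢ Icc 1 n) (hanti : ∀ c ∈ S, ∀ c' ∈ S, c.1 < c'.1 → c'.2 ≤ c.2) :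
    #S ≤ m + n - 1 := by
  have hmaps : Set.MapsTo (fun c : ℕ × ℕ => c.1 + (n - c.2)) S (Icc 1 (m + n - 1)) := by
    intro c hc
    have := mem_product.1 (hS hc)
    simp only [mem_Icc, coe_Icc, Set.mem_Icc] at this ⊢
    omega
  have hinj : Set.InjOn (fun c : ℕ × ℕ => c.1 + (n - c.2)) S := by
    rintro ⟨k, j⟩ hc ⟨k', j'⟩ hc' (heq : k + (n - j) = k' + (n - j'))
    have := hanti _ hc _ hc'
    have := hanti _ hc' _ hc
    have := mem_product.1 (hS hc)
    have := mem_product.1 (hS hc')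
    simp only [Prod.mk.injEq, mem_Icc] at *
    omega
  simpa using card_le_card_of_injOn _ hmaps hinj

namespace MonoPoly

variable {m n : ℕ} {Q : MonoPoly m n}

theorem Increasing.snd_le_of_fst_lt (hQ : Q.Increasing) {c c' : ℕ × ℕ} (hc : c ∈ Q.cells)
    (hc' : c' ∈ Q.cells) (hlt : c.1 < c'.1) : c.2 ≤ c'.2 := by
  obtain ⟨hr, -, -, hmax⟩ := hc
  obtain ⟨-, hs', hmin', -⟩ := hc'
  have := Q.one_le_r
  calc c.2 ≤ Q.P c.1 := hmax.trans (max_le (hQ _ _ (by omega) (by omega) (by omega)) le_rfl)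
    _ ≤ Q.P (c'.1 - 1) := hQ _ _ (by omega) (by omega) (by omega)
    _ ≤ c'.2 := (le_min le_rfl (hQ _ _ (by omega) (by omega) hs')).trans hmin'

theorem Decreasing.snd_le_of_fst_lt (hQ : Q.Decreasing) {c c' : ℕ × ℕ} (hc : c ∈ Q.cells)
    (hc' : c' ∈ Q.cells) (hlt : c.1 < c'.1) : c'.2 ≤ c.2 := by
  obtain ⟨hr, -, hmin, -⟩ := hc
  obtain ⟨-, hs', -, hmax'⟩ := hc'
  have := Q.one_le_r
  calc c'.2 ≤ Q.P (c'.1 - 1) := hmax'.trans (max_le le_rfl (hQ _ _ (by omega) (by omega) hs'))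
    _ ≤ Q.P c.1 := hQ _ _ (by omega) (by omega) (by omega)
    _ ≤ c.2 := (le_min (hQ _ _ (by omega) (by omega) (by omega)) le_rfl).trans hmin

open Classical in
theorem card_cells_inter_le (hQ : Q.Increasing ∨ Q.Decreasing) :
    #{c ∈ Icc 1 m ×ˢ Icc 1 n | c ∈ Q.cells} ≤ m + n - 1 := by
  rcases hQ with hQ | hQ
  · refine card_le_of_forall_lt_imp_le (filter_subset _ _) fun c hc c' hc' ↦ ?_
    exact hQ.snd_le_of_fst_lt (mem_filter.1 hc).2 (mem_filter.1 hc').2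
  · refine card_le_of_forall_lt_imp_ge (filter_subset _ _) fun c hc c' hc' ↦ ?_
    exact hQ.snd_le_of_fst_lt (mem_filter.1 hc).2 (mem_filter.1 hc').2

end MonoPoly

open Classical in
theorem IsIDCovering.mul_le {m n i d : ℕ} {F : Fin i → MonoPoly m n}
    {G : Fin d → MonoPoly m n} (hcov : IsIDCovering m n i d F G) :
    m * n ≤ (i + d) * (m + n - 1) := by
  obtain ⟨hF, hG, hcover⟩ := hcov
  let Q : Fin i ⊕ Fin d → MonoPoly m n := Sum.elim F G
  have hsub : Icc 1 m ×ˢ Icc 1 n ⊆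
      univ.biUnion fun a ↦ {c ∈ Icc 1 m ×ˢ Icc 1 n | c ∈ (Q a).cells} := by
    rintro ⟨k, l⟩ hkl
    obtain ⟨⟨hk, hk'⟩, hl, hl'⟩ := by simpa only [mem_product, mem_Icc] using hkl
    simp only [mem_biUnion, mem_univ, mem_filter, true_and, Sum.exists]
    rcases hcover k l hk hk' hl hl' with ⟨a, ha⟩ | ⟨b, hb⟩
    exacts [Or.inl ⟨a, hkl, ha⟩, Or.inr ⟨b, hkl, hb⟩]
  calc m * n = #(Icc 1 m ×ˢ Icc 1 n) := by simp
    _ ≤ ∑ a, #{c ∈ Icc 1 m ×ˢ Icc 1 n | c ∈ (Q a).cells} :=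
      (card_le_card hsub).trans card_biUnion_le
    _ ≤ ∑ _a : Fin i ⊕ Fin d, (m + n - 1) := by
      refine sum_le_sum fun a _ ↦ MonoPoly.card_cells_inter_le ?_
      rcases a with a | b
      exacts [Or.inl (hF a), Or.inr (hG b)]
    _ = (i + d) * (m + n - 1) := by simp

theorem mul_tsub_le_of_mul_le_mul_add_tsub_one {m n p : ℕ} (h : m * n ≤ p * (m + n - 1)) :
    m * (n - p) ≤ p * (n - 1) := by
  rcases Nat.eq_zero_or_pos n with rfl | hn
  · simp
  rcases le_or_gt p n with hpn | hnp
  · zify [hpn, hn, show 1 ≤ m + n by omega] at h ⊢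
    linarith
  · simp [Nat.sub_eq_zero_of_le hnp.le]

/-- If `i + d < n` and `R_{m×n}` admits an `(i,d)`-covering, then
`m (n - (i+d)) ≤ (i+d)(n-1)`; in particular the set of all such `m` is
bounded. -/
theorem stmt10 (n i d m : ℕ) (h : i + d < n)
    (hcov : ∃ (F : Fin i → MonoPoly m n) (G : Fin d → MonoPoly m n),
        IsIDCovering m n i d F G) :
    m * (n - (i + d)) ≤ (i + d) * (n - 1) ∧
    BddAbove {m' : ℕ | ∃ (F : Fin i → MonoPoly m' n) (G : Fin d → MonoPoly m' n),
        IsIDCovering m' n i d F G} := by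
  have bound : ∀ {m}, (∃ (F : Fin i → MonoPoly m n) (G : Fin d → MonoPoly m n),
      IsIDCovering m n i d F G) → m * (n - (i + d)) ≤ (i + d) * (n - 1) :=
    fun ⟨_, _, hFG⟩ ↦ mul_tsub_le_of_mul_le_mul_add_tsub_one hFG.mul_le
  refine ⟨bound hcov, (i + d) * (n - 1), fun m' hm' ↦ ?_⟩
  exact (Nat.le_mul_of_pos_right m' (Nat.sub_pos_of_lt h)).trans (bound hm')
end

section
/- Let n, i, d be natural numbers with i + d < n, and let m be the largest natural number such that R_{m×n} admits an (i,d)-covering. If some (i,d)-covering of R_{m×n} contains an increasing polyomino I and a decreasing polyomino D that are both fully defined on {0,…,m}, then I(0) < D(0) and I(m) > D(m). -/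
/- If `D(0) ≤ I(0)`, prepend a column to the rectangle. Extend `I` to it by
`I(0) := 1` and `D` by `D(0) := n`; their first-column cells then span `[1, I(0)]` and
`[D(0), n]`, which together cover the new column, while every other tile is shifted one
column to the right. This is an `(i,d)`-covering of `R_{(m+1)×n}`, contradicting the
maximality of `m`. The inequality at `m` follows by the left-right reflection of the
rectangle, which exchanges increasing and decreasing tiles. -/

lemma ite_pred_le_ite_pred {β : Type*} [Preorder β] {f : ℕ → β} {v : β} {s : ℕ}
    (hf : ∀ t u, t ≤ u → u ≤ s → f t ≤ f u) (hv : v ≤ f 0) :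
    ∀ t u, t ≤ u → u ≤ s + 1 →
      (if t = 0 then v else f (t - 1)) ≤ (if u = 0 then v else f (u - 1)) := by
  rintro (_ | t) (_ | u) htu hu
  · exact le_rfl
  · simpa using hv.trans (hf 0 u (Nat.zero_le u) (by omega))
  · omega
  · simpa using hf t u (by omega) (by omega)

namespace MonoPoly

variable {m n : ℕ}

@[simps]
def shift (Q : MonoPoly m n) : MonoPoly (m + 1) n where
  r := Q.r + 1
  s := Q.s + 1
  P t := Q.P (t - 1)
  one_le_r := by omega
  r_le_s := by have := Q.r_le_s; omega
  s_le_m := by have := Q.s_le_m; omega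
  val_mem t h₁ h₂ := by
    have := Q.one_le_r
    exact Q.val_mem (t - 1) (by omega) (by omega)
  mono := by
    have := Q.one_le_r
    exact Q.mono.imp (fun h t u h₁ h₂ h₃ => h _ _ (by omega) (by omega) (by omega))
      (fun h t u h₁ h₂ h₃ => h _ _ (by omega) (by omega) (by omega))

lemma Increasing.shift {Q : MonoPoly m n} (hQ : Q.Increasing) : Q.shift.Increasing := by
  intro t u h₁ h₂ h₃
  have := Q.one_le_r
  simp only [shift_r, shift_s, shift_P] at *
  exact hQ _ _ (by omega) (by omega) (by omega)

lemma Decreasing.shift {Q : MonoPoly m n} (hQ : Q.Decreasing) : Q.shift.Decreasing := by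
  intro t u h₁ h₂ h₃
  have := Q.one_le_r
  simp only [shift_r, shift_s, shift_P] at *
  exact hQ _ _ (by omega) (by omega) (by omega)

lemma succ_mem_cells_shift {Q : MonoPoly m n} {k l : ℕ} (h : (k, l) ∈ Q.cells) :
    (k + 1, l) ∈ Q.shift.cells := by
  obtain ⟨h₁, h₂, h₃, h₄⟩ := h
  exact ⟨by simpa using h₁, by simpa using h₂, by simpa using h₃, by simpa using h₄⟩

/-- Prepend a column to a tile starting in the first column, with boundary value `v` at `0`. -/
@[simps]
def consLeft (Q : MonoPoly m n) (hr : Q.r = 1) (v : ℕ) (hv : 1 ≤ v ∧ v ≤ n)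
    (hmono : Q.Increasing ∧ v ≤ Q.P 0 ∨ Q.Decreasing ∧ Q.P 0 ≤ v) : MonoPoly (m + 1) n where
  r := 1
  s := Q.s + 1
  P t := if t = 0 then v else Q.P (t - 1)
  one_le_r := le_rfl
  r_le_s := by omega
  s_le_m := by have := Q.s_le_m; omega
  val_mem t _ ht := by
    split_ifs
    · exact hv
    · exact Q.val_mem (t - 1) (by omega) (by omega)
  mono := hmono.imp
    (fun ⟨hQ, hv⟩ t u _ => ite_pred_le_ite_pred (fun t u => hQ t u (by omega)) hv t u)
    (fun ⟨hQ, hv⟩ t u _ =>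
      ite_pred_le_ite_pred (β := ℕᵒᵈ) (fun t u => hQ t u (by omega)) hv t u)

section consLeft

variable {Q : MonoPoly m n} {hr : Q.r = 1} {v : ℕ} {hv : 1 ≤ v ∧ v ≤ n}
  {hmono : Q.Increasing ∧ v ≤ Q.P 0 ∨ Q.Decreasing ∧ Q.P 0 ≤ v}

lemma Increasing.consLeft (hQ : Q.Increasing) (hv0 : v ≤ Q.P 0) :
    (Q.consLeft hr v hv hmono).Increasing := fun t u _ =>
  ite_pred_le_ite_pred (fun t u => hQ t u (by omega)) hv0 t u

lemma Decreasing.consLeft (hQ : Q.Decreasing) (hv0 : Q.P 0 ≤ v) :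
    (Q.consLeft hr v hv hmono).Decreasing := fun t u _ =>
  ite_pred_le_ite_pred (β := ℕᵒᵈ) (fun t u => hQ t u (by omega)) hv0 t u

lemma one_mem_cells_consLeft {l : ℕ} (h₁ : min v (Q.P 0) ≤ l) (h₂ : l ≤ max v (Q.P 0)) :
    (1, l) ∈ (Q.consLeft hr v hv hmono).cells :=
  ⟨le_rfl, by simp, by simpa using h₁, by simpa using h₂⟩

lemma succ_mem_cells_consLeft {k l : ℕ} (h : (k, l) ∈ Q.cells) :
    (k + 1, l) ∈ (Q.consLeft hr v hv hmono).cells := by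
  obtain ⟨h₁, h₂, h₃, h₄⟩ := h
  have hk : k ≠ 0 := by omega
  exact ⟨by simp, by simpa using h₂, by simpa [hk] using h₃, by simpa [hk] using h₄⟩

end consLeft

/-- The mirror image under the reflection `k ↦ m + 1 - k` of the columns. -/
@[simps]
def reflect (Q : MonoPoly m n) : MonoPoly m n where
  r := m + 1 - Q.s
  s := m + 1 - Q.r
  P t := Q.P (m - t)
  one_le_r := by have := Q.s_le_m; omega
  r_le_s := by have := Q.r_le_s; have := Q.s_le_m; omega
  s_le_m := by have := Q.one_le_r; omega
  val_mem t h₁ h₂ := by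
    have := Q.r_le_s
    have := Q.s_le_m
    exact Q.val_mem (m - t) (by omega) (by omega)
  mono := by
    have := Q.r_le_s
    have := Q.s_le_m
    exact Q.mono.symm.imp (fun h t u h₁ h₂ h₃ => h _ _ (by omega) (by omega) (by omega))
      (fun h t u h₁ h₂ h₃ => h _ _ (by omega) (by omega) (by omega))

lemma Increasing.reflect {Q : MonoPoly m n} (hQ : Q.Increasing) : Q.reflect.Decreasing := by
  intro t u h₁ h₂ h₃
  have := Q.r_le_s
  have := Q.s_le_m
  simp only [reflect_r, reflect_s, reflect_P] at *
  exact hQ _ _ (by omega) (by omega) (by omega)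

lemma Decreasing.reflect {Q : MonoPoly m n} (hQ : Q.Decreasing) : Q.reflect.Increasing := by
  intro t u h₁ h₂ h₃
  have := Q.r_le_s
  have := Q.s_le_m
  simp only [reflect_r, reflect_s, reflect_P] at *
  exact hQ _ _ (by omega) (by omega) (by omega)

lemma reflect_r_eq_one {Q : MonoPoly m n} (hs : Q.s = m) : Q.reflect.r = 1 := by
  simp [hs]

lemma mem_cells_reflect {Q : MonoPoly m n} {k l : ℕ} (h : (k, l) ∈ Q.cells) :
    (m + 1 - k, l) ∈ Q.reflect.cells := by
  obtain ⟨h₁, h₂, h₃, h₄⟩ := h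
  have := Q.s_le_m
  have e₁ : m - (m + 1 - k - 1) = k := by omega
  have e₂ : m - (m + 1 - k) = k - 1 := by omega
  refine ⟨by simp; omega, by simp; omega, ?_, ?_⟩
  · simpa only [reflect_P, e₁, e₂, min_comm] using h₃
  · simpa only [reflect_P, e₁, e₂, max_comm] using h₄

end MonoPoly

def coveringWidths (n i d : ℕ) : Set ℕ :=
  {m | ∃ (F : Fin i → MonoPoly m n) (G : Fin d → MonoPoly m n), IsIDCovering m n i d F G}

section

variable {m n i d : ℕ} {F : Fin i → MonoPoly m n} {G : Fin d → MonoPoly m n}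

lemma IsIDCovering.reflect (hcov : IsIDCovering m n i d F G) :
    IsIDCovering m n d i (fun b => (G b).reflect) (fun a => (F a).reflect) := by
  obtain ⟨hF, hG, hcells⟩ := hcov
  refine ⟨fun b => (hG b).reflect, fun a => (hF a).reflect, fun k l hk₁ hk₂ hl₁ hl₂ => ?_⟩
  have hk : m + 1 - (m + 1 - k) = k := by omega
  rcases hcells (m + 1 - k) l (by omega) (by omega) hl₁ hl₂ with ⟨a, ha⟩ | ⟨b, hb⟩
  · exact Or.inr ⟨a, hk ▸ MonoPoly.mem_cells_reflect ha⟩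
  · exact Or.inl ⟨b, hk ▸ MonoPoly.mem_cells_reflect hb⟩

lemma coveringWidths_comm (n i d : ℕ) : coveringWidths n i d = coveringWidths n d i := by
  have key : ∀ i d, coveringWidths n i d ⊆ coveringWidths n d i :=
    fun _ _ _ ⟨_, _, hcov⟩ => ⟨_, _, hcov.reflect⟩
  exact (key i d).antisymm (key d i)

lemma succ_mem_cells_update_shift {p : ℕ} {T : Fin p → MonoPoly m n} {a : Fin p}
    {Q : MonoPoly (m + 1) n} (hQ : ∀ {k l}, (k, l) ∈ (T a).cells → (k + 1, l) ∈ Q.cells)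
    {a' : Fin p} {k l : ℕ} (h : (k, l) ∈ (T a').cells) :
    (k + 1, l) ∈ (Function.update (fun a => (T a).shift) a Q a').cells := by
  rcases eq_or_ne a' a with rfl | hne
  · simpa using hQ h
  · simpa [hne] using MonoPoly.succ_mem_cells_shift h

lemma IsIDCovering.succ_mem_coveringWidths (hcov : IsIDCovering m n i d F G) {a : Fin i}
    {b : Fin d} (ha : (F a).r = 1) (hb : (G b).r = 1) (hle : (G b).P 0 ≤ (F a).P 0) :
    m + 1 ∈ coveringWidths n i d := by
  obtain ⟨hF, hG, hcells⟩ := hcov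
  have hI₀ := (F a).val_mem 0 (by simp [ha]) (Nat.zero_le _)
  have hD₀ := (G b).val_mem 0 (by simp [hb]) (Nat.zero_le _)
  let I := (F a).consLeft ha 1 ⟨le_rfl, by omega⟩ (Or.inl ⟨hF a, hI₀.1⟩)
  let D := (G b).consLeft hb n ⟨by omega, le_rfl⟩ (Or.inr ⟨hG b, hD₀.2⟩)
  refine ⟨Function.update (fun a => (F a).shift) a I,
    Function.update (fun b => (G b).shift) b D, ?_, ?_, ?_⟩
  · exact (Function.forall_update_iff _ fun _ (Q : MonoPoly (m + 1) n) => Q.Increasing).2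
      ⟨(hF a).consLeft hI₀.1, fun a' _ => (hF a').shift⟩
  · exact (Function.forall_update_iff _ fun _ (Q : MonoPoly (m + 1) n) => Q.Decreasing).2
      ⟨(hG b).consLeft hD₀.2, fun b' _ => (hG b').shift⟩
  intro k l hk₁ hk₂ hl₁ hl₂
  obtain rfl | hk := eq_or_ne k 1
  · by_cases hl : l ≤ (F a).P 0
    · exact Or.inl ⟨a, by simpa [I] using
        MonoPoly.one_mem_cells_consLeft (Q := F a) (by omega) (by omega)⟩
    · exact Or.inr ⟨b, by simpa [D] using
        MonoPoly.one_mem_cells_consLeft (Q := G b) (by omega) (by omega)⟩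
  obtain ⟨k, rfl⟩ : ∃ k', k = k' + 1 := ⟨k - 1, by omega⟩
  refine (hcells k l (by omega) (by omega) hl₁ hl₂).imp ?_ ?_
  · exact fun ⟨a', h⟩ => ⟨a', succ_mem_cells_update_shift MonoPoly.succ_mem_cells_consLeft h⟩
  · exact fun ⟨b', h⟩ => ⟨b', succ_mem_cells_update_shift MonoPoly.succ_mem_cells_consLeft h⟩

lemma IsIDCovering.P_zero_lt (hm : IsGreatest (coveringWidths n i d) m)
    (hcov : IsIDCovering m n i d F G) {a : Fin i} {b : Fin d} (ha : (F a).r = 1)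
    (hb : (G b).r = 1) : (F a).P 0 < (G b).P 0 :=
  lt_of_not_ge fun hle => (hm.2 (hcov.succ_mem_coveringWidths ha hb hle)).not_gt m.lt_succ_self

end

theorem stmt11_general (n i d m : ℕ)
    (hm : IsGreatest {m' : ℕ | ∃ (F : Fin i → MonoPoly m' n)
        (G : Fin d → MonoPoly m' n), IsIDCovering m' n i d F G} m)
    (F : Fin i → MonoPoly m n) (G : Fin d → MonoPoly m n)
    (hcov : IsIDCovering m n i d F G)
    (a : Fin i) (b : Fin d) (ha : (F a).Full) (hb : (G b).Full) :
    (F a).P 0 < (G b).P 0 ∧ (G b).P m < (F a).P m := by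
  replace hm : IsGreatest (coveringWidths n i d) m := hm
  refine ⟨hcov.P_zero_lt hm ha.1 hb.1, ?_⟩
  simpa using hcov.reflect.P_zero_lt (coveringWidths_comm n i d ▸ hm)
    (MonoPoly.reflect_r_eq_one hb.2) (MonoPoly.reflect_r_eq_one ha.2)

/-- If `i + d < n`, `m` is the largest width admitting an `(i,d)`-covering of
`R_{m×n}`, and an `(i,d)`-covering of `R_{m×n}` contains an increasing tile `I`
and a decreasing tile `D`, both fully defined on `{0,…,m}`, then `I(0) < D(0)`
and `I(m) > D(m)`. -/
theorem stmt11 (n i d m : ℕ) (h : i + d < n)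
    (hm : IsGreatest {m' : ℕ | ∃ (F : Fin i → MonoPoly m' n)
        (G : Fin d → MonoPoly m' n), IsIDCovering m' n i d F G} m)
    (F : Fin i → MonoPoly m n) (G : Fin d → MonoPoly m n)
    (hcov : IsIDCovering m n i d F G)
    (a : Fin i) (b : Fin d) (ha : (F a).Full) (hb : (G b).Full) :
    (F a).P 0 < (G b).P 0 ∧ (G b).P m < (F a).P m :=
  stmt11_general n i d m hm F G hcov a b ha hb
end

section
/- For all natural numbers e, i, d with e ≥ 1, the lattice rectangle R_{M×n} with width M = i + d + ⌊id/e⌋ and height n = e + i + d admits an (i,d)-covering. (Equivalently, m(e+i+d, i, d) ≥ i + d + ⌊id/e⌋.) -/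
/-!
Work with coverings by paths that span all columns, have prescribed endpoints and are ordered
within each family. For height `e + i + d` these satisfy a Euclidean recursion in `(e, i, d)`.
Letting `e` new decreasing paths dive in front of a covering for `(e, i, d)` adds `i + e`
columns and gives one for `(e, i, d + e)`; turning the picture upside down exchanges `i` and `d`;
and exchanging rows and columns, which inverts every path, turns a covering of width
`M ≥ e + i + d` and height `q + i + d` into one of width `q + i + d` and height `e + i + d`.
If `i, d < e`, then `q = ⌊id/e⌋ < e` and `⌊id/q⌋ ≥ e`, which closes the recursion; for `q = 0`
a covering of height `i + d` exists in every width.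
-/

open Finset

section InitialSegment

variable {n : ℕ} {p : ℕ → Prop} [DecidablePred p]

lemma lt_card_filter_range_iff (hp : ∀ j l, j ≤ l → l < n → p l → p j) {l : ℕ} (hl : l < n) :
    l < #{j ∈ range n | p j} ↔ p l := by
  constructor
  · intro hcard
    by_contra hpl
    have hsub : {j ∈ range n | p j} ⊆ range l := by
      intro j hj
      simp only [mem_filter, mem_range] at hj ⊢
      exact lt_of_not_ge fun hlj => hpl (hp l j hlj hj.1 hj.2)
    have := card_le_card hsub
    simp only [card_range] at this
    omega
  · intro hpl
    have hsub : range (l + 1) ⊆ {j ∈ range n | p j} := by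
      intro j hj
      simp only [mem_filter, mem_range] at hj ⊢
      exact ⟨by omega, hp j l (by omega) hl hpl⟩
    simpa using card_le_card hsub

end InitialSegment

/-- Clamping to `[β, n - i + β]` enforces the endpoints required of a `SortedFullCovering`
without uncovering any cell. -/
lemma exists_clamp_between {n i l x y α : ℕ} {g : ℕ → ℕ → ℕ}
    (hg : ∀ v, MonotoneOn (g · v) (Set.Icc 1 i)) (hα : α ∈ Set.Icc 1 i)
    (hl : l ∈ Set.Icc 1 n) (hin : i ≤ n) (hx : g α x ≤ l) (hy : l ≤ g α y) :
    ∃ β ∈ Set.Icc 1 i,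
      max β (min (g β x) (n - i + β)) ≤ l ∧ l ≤ max β (min (g β y) (n - i + β)) := by
  obtain ⟨hα1, hαi⟩ := hα
  obtain ⟨hl1, hln⟩ := hl
  by_cases hlow : l < α
  · have : g l x ≤ g α x := hg x ⟨hl1, by omega⟩ ⟨hα1, hαi⟩ hlow.le
    exact ⟨l, ⟨hl1, by omega⟩, by omega, by omega⟩
  by_cases hhigh : n - i + α < l
  · have : g α y ≤ g (l + i - n) y := hg y ⟨hα1, hαi⟩ ⟨by omega, by omega⟩ (by omega)
    exact ⟨l + i - n, ⟨by omega, by omega⟩, by omega, by omega⟩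
  · exact ⟨α, ⟨hα1, hαi⟩, by omega, by omega⟩

def MonoPoly.ofFull {m n : ℕ} (f : ℕ → ℕ) (hm : 1 ≤ m) (hf : ∀ t ≤ m, f t ∈ Set.Icc 1 n)
    (hmono : MonotoneOn f (Set.Iic m) ∨ AntitoneOn f (Set.Iic m)) : MonoPoly m n where
  r := 1
  s := m
  P := f
  one_le_r := le_rfl
  r_le_s := hm
  s_le_m := le_rfl
  val_mem t _ ht := hf t ht
  mono := hmono.imp (fun h _ _ _ htu hu => h (htu.trans hu) hu htu)
    (fun h _ _ _ htu hu => h (htu.trans hu) hu htu)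

/-- An `(i,d)`-covering of `R_{m×n}` by polyominoes fully defined on `{0,…,m}`, given by their
encoding functions, normalised so that the `a`-th increasing path runs from height `a` up to
`n - i + a`, the `b`-th decreasing path runs from `n - d + b` down to `b`, and within each
family the paths are ordered by their index. -/
structure SortedFullCovering (m n i d : ℕ) where
  inc : ℕ → ℕ → ℕ
  dec : ℕ → ℕ → ℕ
  inc_zero : ∀ a ∈ Set.Icc 1 i, inc a 0 = a
  inc_last : ∀ a ∈ Set.Icc 1 i, inc a m + i = n + a
  inc_mono : ∀ a ∈ Set.Icc 1 i, MonotoneOn (inc a) (Set.Iic m)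
  inc_sorted : ∀ t ≤ m, MonotoneOn (inc · t) (Set.Icc 1 i)
  dec_zero : ∀ b ∈ Set.Icc 1 d, dec b 0 + d = n + b
  dec_last : ∀ b ∈ Set.Icc 1 d, dec b m = b
  dec_anti : ∀ b ∈ Set.Icc 1 d, AntitoneOn (dec b) (Set.Iic m)
  dec_sorted : ∀ t ≤ m, MonotoneOn (dec · t) (Set.Icc 1 d)
  cover : ∀ t l, 1 ≤ t → t ≤ m → 1 ≤ l → l ≤ n →
    (∃ a ∈ Set.Icc 1 i, inc a (t - 1) ≤ l ∧ l ≤ inc a t) ∨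
    (∃ b ∈ Set.Icc 1 d, dec b t ≤ l ∧ l ≤ dec b (t - 1))

namespace SortedFullCovering

variable {m n i d : ℕ}

section Basic

variable (S : SortedFullCovering m n i d)

lemma inc_mem_Icc {a t : ℕ} (ha : a ∈ Set.Icc 1 i) (ht : t ≤ m) : S.inc a t ∈ Set.Icc 1 n := by
  have h0 := S.inc_mono a ha (Set.mem_Iic.2 (Nat.zero_le m)) (Set.mem_Iic.2 ht) (Nat.zero_le t)
  have hm := S.inc_mono a ha (Set.mem_Iic.2 ht) (Set.mem_Iic.2 le_rfl) ht
  have := S.inc_zero a ha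
  have := S.inc_last a ha
  obtain ⟨ha1, hai⟩ := ha
  constructor <;> omega

lemma dec_mem_Icc {b t : ℕ} (hb : b ∈ Set.Icc 1 d) (ht : t ≤ m) : S.dec b t ∈ Set.Icc 1 n := by
  have h0 := S.dec_anti b hb (Set.mem_Iic.2 (Nat.zero_le m)) (Set.mem_Iic.2 ht) (Nat.zero_le t)
  have hm := S.dec_anti b hb (Set.mem_Iic.2 ht) (Set.mem_Iic.2 le_rfl) ht
  have := S.dec_zero b hb
  have := S.dec_last b hb
  obtain ⟨hb1, hbd⟩ := hb
  constructor <;> omega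

def reflect : SortedFullCovering m n d i where
  inc a t := n + 1 - S.dec (d + 1 - a) t
  dec b t := n + 1 - S.inc (i + 1 - b) t
  inc_zero := fun a ⟨ha1, had⟩ => by
    have := S.dec_zero (d + 1 - a) ⟨by omega, by omega⟩
    omega
  inc_last := fun a ⟨ha1, had⟩ => by
    have := S.dec_last (d + 1 - a) ⟨by omega, by omega⟩
    have := (S.dec_mem_Icc (b := d + 1 - a) ⟨by omega, by omega⟩ (le_refl m)).2
    omega
  inc_mono := fun a ⟨ha1, had⟩ t ht u hu htu => by
    have := S.dec_anti (d + 1 - a) ⟨by omega, by omega⟩ ht hu htu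
    dsimp only
    omega
  inc_sorted t ht := fun a ⟨ha1, _⟩ a' ⟨_, had⟩ haa' => by
    have : S.dec (d + 1 - a') t ≤ S.dec (d + 1 - a) t :=
      S.dec_sorted t ht ⟨by omega, by omega⟩ ⟨by omega, by omega⟩ (by omega)
    dsimp only
    omega
  dec_zero := fun b ⟨hb1, hbi⟩ => by
    have := S.inc_zero (i + 1 - b) ⟨by omega, by omega⟩
    have := (S.inc_mem_Icc (a := i + 1 - b) ⟨by omega, by omega⟩ (Nat.zero_le m)).2
    omega
  dec_last := fun b ⟨hb1, hbi⟩ => by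
    have := S.inc_last (i + 1 - b) ⟨by omega, by omega⟩
    have := (S.inc_mem_Icc (a := i + 1 - b) ⟨by omega, by omega⟩ (le_refl m)).2
    omega
  dec_anti := fun b ⟨hb1, hbi⟩ t ht u hu htu => by
    have := S.inc_mono (i + 1 - b) ⟨by omega, by omega⟩ ht hu htu
    dsimp only
    omega
  dec_sorted t ht := fun b ⟨hb1, _⟩ b' ⟨_, hbi⟩ hbb' => by
    have : S.inc (i + 1 - b') t ≤ S.inc (i + 1 - b) t :=
      S.inc_sorted t ht ⟨by omega, by omega⟩ ⟨by omega, by omega⟩ (by omega)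
    dsimp only
    omega
  cover t l ht htm hl hln := by
    rcases S.cover t (n + 1 - l) ht htm (by omega) (by omega) with
      ⟨a, ⟨ha1, hai⟩, hlo, hhi⟩ | ⟨b, ⟨hb1, hbd⟩, hlo, hhi⟩
    · refine .inr ⟨i + 1 - a, ⟨by omega, by omega⟩, ?_⟩
      rw [show i + 1 - (i + 1 - a) = a by omega]
      omega
    · refine .inl ⟨d + 1 - b, ⟨by omega, by omega⟩, ?_⟩
      rw [show d + 1 - (d + 1 - b) = b by omega]
      omega

def noSlack (hm : 0 < m) : SortedFullCovering m (i + d) i d where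
  inc a t := if t < m then a else d + a
  dec b t := if t < m then i + b else b
  inc_zero a _ := if_pos hm
  inc_last a _ := by simp only [lt_irrefl, if_false]; omega
  inc_mono a _ t _ u (hu : u ≤ m) htu := by dsimp only; split_ifs <;> omega
  inc_sorted t _ a _ a' _ haa' := by dsimp only; split_ifs <;> omega
  dec_zero b _ := by simp only [if_pos hm]; omega
  dec_last b _ := by simp only [lt_irrefl, if_false]
  dec_anti b _ t _ u (hu : u ≤ m) htu := by dsimp only; split_ifs <;> omega
  dec_sorted t _ b _ b' _ hbb' := by dsimp only; split_ifs <;> omega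
  cover t l ht htm hl hln := by
    by_cases hli : l ≤ i
    · exact .inl ⟨l, ⟨hl, hli⟩, by split_ifs <;> omega⟩
    · exact .inr ⟨l - i, ⟨by omega, by omega⟩, by split_ifs <;> omega⟩

end Basic

theorem exists_isIDCovering (S : SortedFullCovering m n i d) (hm : i + d ≤ m) :
    ∃ (F : Fin i → MonoPoly m n) (G : Fin d → MonoPoly m n), IsIDCovering m n i d F G := by
  have hinc (a : Fin i) : a.1 + 1 ∈ Set.Icc 1 i := ⟨by omega, a.2⟩
  have hdec (b : Fin d) : b.1 + 1 ∈ Set.Icc 1 d := ⟨by omega, b.2⟩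
  refine ⟨fun a => .ofFull (S.inc (a + 1)) (by have := a.2; omega)
      (fun _ => S.inc_mem_Icc (hinc a)) (.inl (S.inc_mono _ (hinc a))),
    fun b => .ofFull (S.dec (b + 1)) (by have := b.2; omega)
      (fun _ => S.dec_mem_Icc (hdec b)) (.inr (S.dec_anti _ (hdec b))),
    fun a t u _ htu hu => S.inc_mono _ (hinc a) (htu.trans hu) hu htu,
    fun b t u _ htu hu => S.dec_anti _ (hdec b) (htu.trans hu) hu htu, ?_⟩
  intro k l hk hkm hl hln
  rcases S.cover k l hk hkm hl hln with ⟨a, ⟨ha1, hai⟩, hlo, hhi⟩ | ⟨b, ⟨hb1, hbd⟩, hlo, hhi⟩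
  · obtain ⟨a, rfl⟩ : ∃ a', a = a' + 1 := ⟨a - 1, by omega⟩
    exact .inl ⟨⟨a, by omega⟩, hk, hkm, (min_le_left _ _).trans hlo, le_max_of_le_right hhi⟩
  · obtain ⟨b, rfl⟩ : ∃ b', b = b' + 1 := ⟨b - 1, by omega⟩
    exact .inr ⟨⟨b, by omega⟩, hk, hkm, (min_le_right _ _).trans hlo, le_max_of_le_left hhi⟩

section Transpose

variable (S : SortedFullCovering m n i d) (k : ℕ)

/-- The inverse of the `α`-th increasing path from the top, i.e. its transpose: transposition
reverses the order of the increasing paths but not that of the decreasing ones. -/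
def incCount (α v : ℕ) : ℕ := #{j ∈ range k | S.inc (i + 1 - α) j ≤ v}

def decCount (b v : ℕ) : ℕ := #{j ∈ range k | v < S.dec b j}

variable {k}

lemma lt_incCount_iff (hk : k ≤ m) {α l v : ℕ} (hα : α ∈ Set.Icc 1 i) (hl : l < k) :
    l < S.incCount k α v ↔ S.inc (i + 1 - α) l ≤ v := by
  obtain ⟨hα1, hαi⟩ := hα
  refine lt_card_filter_range_iff (fun j j' hjj' hj' h => le_trans ?_ h) hl
  exact S.inc_mono _ ⟨by omega, by omega⟩ (show j ≤ m by omega) (show j' ≤ m by omega) hjj'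

lemma lt_decCount_iff (hk : k ≤ m) {b l v : ℕ} (hb : b ∈ Set.Icc 1 d) (hl : l < k) :
    l < S.decCount k b v ↔ v < S.dec b l := by
  refine lt_card_filter_range_iff (fun j j' hjj' hj' h => lt_of_lt_of_le h ?_) hl
  exact S.dec_anti _ hb (show j ≤ m by omega) (show j' ≤ m by omega) hjj'

lemma incCount_le (α v : ℕ) : S.incCount k α v ≤ k :=
  (card_filter_le _ _).trans_eq (card_range k)

lemma decCount_le (b v : ℕ) : S.decCount k b v ≤ k :=
  (card_filter_le _ _).trans_eq (card_range k)

lemma incCount_mono (α : ℕ) : Monotone (S.incCount k α) := fun _ _ hvw =>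
  card_le_card (monotone_filter_right _ fun _ _ h => h.trans hvw)

lemma decCount_anti (b : ℕ) : Antitone (S.decCount k b) := fun _ _ hvw =>
  card_le_card (monotone_filter_right _ fun _ _ h => lt_of_le_of_lt hvw h)

lemma incCount_sorted (hk : k ≤ m) (v : ℕ) : MonotoneOn (S.incCount k · v) (Set.Icc 1 i) :=
  fun α ⟨_, hαi⟩ α' ⟨hα'1, _⟩ hαα' => card_le_card <| monotone_filter_right _ fun j hj h =>
    le_trans (S.inc_sorted j (by simp only [mem_range] at hj; omega)
      ⟨by omega, by omega⟩ ⟨by omega, by omega⟩ (by omega)) h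

lemma decCount_sorted (hk : k ≤ m) (v : ℕ) : MonotoneOn (S.decCount k · v) (Set.Icc 1 d) :=
  fun b hb b' hb' hbb' => card_le_card <| monotone_filter_right _ fun j hj h =>
    lt_of_lt_of_le h (S.dec_sorted j (by simp only [mem_range] at hj; omega) hb hb' hbb')

def transpose (hk : k ≤ m) (hik : i + d ≤ k) :
    SortedFullCovering n k i d where
  inc α v := max α (min (S.incCount k α v) (k - i + α))
  dec b v := max b (min (S.decCount k b v) (k - d + b))
  inc_zero := fun α ⟨hα1, hαi⟩ => by
    have hzero : S.incCount k α 0 = 0 := by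
      by_contra h
      have := (S.lt_incCount_iff (l := 0) (v := 0) hk ⟨hα1, hαi⟩ (by omega)).1 (by omega)
      have := (S.inc_mem_Icc (a := i + 1 - α) ⟨by omega, by omega⟩ (Nat.zero_le m)).1
      omega
    omega
  inc_last := fun α ⟨hα1, hαi⟩ => by
    have := (S.lt_incCount_iff (l := k - 1) hk ⟨hα1, hαi⟩ (by omega)).2
      (S.inc_mem_Icc (a := i + 1 - α) ⟨by omega, by omega⟩ (by omega)).2
    have := S.incCount_le (k := k) α n
    omega
  inc_mono α _ v _ w _ hvw := by
    have := S.incCount_mono (k := k) α hvw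
    dsimp only
    omega
  inc_sorted v _ α hα α' hα' hαα' := by
    have := S.incCount_sorted hk v hα hα' hαα'
    dsimp only at this ⊢
    omega
  dec_zero := fun b ⟨hb1, hbd⟩ => by
    have := (S.lt_decCount_iff (l := k - 1) (v := 0) hk ⟨hb1, hbd⟩ (by omega)).2
      (S.dec_mem_Icc ⟨hb1, hbd⟩ (by omega)).1
    have := S.decCount_le (k := k) b 0
    omega
  dec_last := fun b ⟨hb1, hbd⟩ => by
    have hzero : S.decCount k b n = 0 := by
      by_contra h
      have := (S.lt_decCount_iff (l := 0) (v := n) hk ⟨hb1, hbd⟩ (by omega)).1 (by omega)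
      have := (S.dec_mem_Icc ⟨hb1, hbd⟩ (Nat.zero_le m)).2
      omega
    omega
  dec_anti b _ v _ w _ hvw := by
    have := S.decCount_anti (k := k) b hvw
    dsimp only
    omega
  dec_sorted v _ b hb b' hb' hbb' := by
    have := S.decCount_sorted hk v hb hb' hbb'
    dsimp only at this ⊢
    omega
  cover t l ht htn hl hlk := by
    rcases S.cover l t hl (by omega) ht htn with
      ⟨a, ⟨ha1, hai⟩, hlo, hhi⟩ | ⟨b, hb, hlo, hhi⟩
    · have hα : i + 1 - a ∈ Set.Icc 1 i := ⟨by omega, by omega⟩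
      have hrev : i + 1 - (i + 1 - a) = a := by omega
      refine .inl (exists_clamp_between (S.incCount_sorted hk) hα ⟨hl, hlk⟩ (by omega) ?_ ?_)
      · by_contra! h
        have := (S.lt_incCount_iff hk hα (h.trans_le (S.incCount_le _ _))).1 h
        rw [hrev] at this
        omega
      · have := (S.lt_incCount_iff (l := l - 1) (v := t) hk hα (by omega)).2 (by rwa [hrev])
        omega
    · refine .inr (exists_clamp_between (S.decCount_sorted hk) hb ⟨hl, hlk⟩ (by omega) ?_ ?_)
      · by_contra! h
        have := (S.lt_decCount_iff hk hb (h.trans_le (S.decCount_le _ _))).1 h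
        omega
      · have := (S.lt_decCount_iff (l := l - 1) (v := t - 1) hk hb (by omega)).2 (by omega)
        omega

end Transpose

section Extend

variable {e : ℕ} (S : SortedFullCovering m (e + i + d) i d)

/-- `i + e` new columns are put in front of `S`, which is shifted up by `e` rows. In the first `i`
of them the increasing paths climb by `e` one after the other, starting with the top one; in
the next `e` the new decreasing paths `1,…,e` dive to the bottom. -/
def extendInc (a t : ℕ) : ℕ :=
  if t ≤ i + e then (if t + a ≤ i then a else a + e) else S.inc a (t - (i + e)) + e

def extendDec (b t : ℕ) : ℕ :=
  if t ≤ i + e then (if t < i + b then i + e + b else b)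
  else if b ≤ e then b else S.dec (b - e) (t - (i + e)) + e

variable {S}

lemma extendInc_of_le {a t : ℕ} (ha : a ∈ Set.Icc 1 i) (ht : i + e ≤ t) :
    S.extendInc a t = S.inc a (t - (i + e)) + e := by
  unfold extendInc
  obtain ⟨ha1, hai⟩ := ha
  split_ifs with h₁ h₂
  · omega
  · rw [show t - (i + e) = 0 by omega, S.inc_zero a ⟨ha1, hai⟩]
  · rfl

lemma extendDec_of_le {b t : ℕ} (hb : b ∈ Set.Icc 1 (d + e)) (ht : i + e ≤ t) :
    S.extendDec b t = if b ≤ e then b else S.dec (b - e) (t - (i + e)) + e := by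
  unfold extendDec
  obtain ⟨hb1, hbd⟩ := hb
  split_ifs with h₁ h₂ h₃ h₃ <;> try omega
  rw [show t - (i + e) = 0 by omega]
  have := S.dec_zero (b - e) ⟨by omega, by omega⟩
  omega

lemma extendInc_mono {a : ℕ} (ha : a ∈ Set.Icc 1 i) :
    MonotoneOn (S.extendInc a) (Set.Iic (i + e + m)) := by
  rw [← Set.Iic_union_Icc_eq_Iic (by omega : i + e ≤ i + e + m)]
  refine MonotoneOn.union_right ?_ ?_ isGreatest_Iic (isLeast_Icc (by omega))
  · intro t (ht : t ≤ i + e) u (hu : u ≤ i + e) htu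
    simp only [extendInc, if_pos ht, if_pos hu]
    split_ifs <;> omega
  · intro t ⟨ht, _⟩ u ⟨hu, hum⟩ htu
    rw [extendInc_of_le ha ht, extendInc_of_le ha hu]
    have := S.inc_mono a ha (show t - (i + e) ≤ m by omega)
      (show u - (i + e) ≤ m by omega) (by omega : t - (i + e) ≤ u - (i + e))
    omega

lemma extendDec_anti {b : ℕ} (hb : b ∈ Set.Icc 1 (d + e)) :
    AntitoneOn (S.extendDec b) (Set.Iic (i + e + m)) := by
  rw [← Set.Iic_union_Icc_eq_Iic (by omega : i + e ≤ i + e + m)]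
  refine AntitoneOn.union_right ?_ ?_ isGreatest_Iic (isLeast_Icc (by omega))
  · intro t (ht : t ≤ i + e) u (hu : u ≤ i + e) htu
    simp only [extendDec, if_pos ht, if_pos hu]
    split_ifs <;> omega
  · intro t ⟨ht, _⟩ u ⟨hu, hum⟩ htu
    rw [extendDec_of_le hb ht, extendDec_of_le hb hu]
    obtain ⟨hb1, hbd⟩ := hb
    split_ifs
    · rfl
    · have := S.dec_anti (b - e) ⟨by omega, by omega⟩ (show t - (i + e) ≤ m by omega)
        (show u - (i + e) ≤ m by omega) (by omega : t - (i + e) ≤ u - (i + e))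
      omega

lemma extendInc_sorted {t : ℕ} (ht : t ≤ i + e + m) :
    MonotoneOn (S.extendInc · t) (Set.Icc 1 i) := by
  intro a ha a' ha' haa'
  by_cases hpre : t ≤ i + e
  · simp only [extendInc, if_pos hpre]
    split_ifs <;> omega
  · have hsuf : i + e ≤ t := by omega
    simp only [extendInc_of_le ha hsuf, extendInc_of_le ha' hsuf]
    have : S.inc a (t - (i + e)) ≤ S.inc a' (t - (i + e)) :=
      S.inc_sorted (t - (i + e)) (by omega) ha ha' haa'
    omega

lemma extendDec_sorted {t : ℕ} (ht : t ≤ i + e + m) :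
    MonotoneOn (S.extendDec · t) (Set.Icc 1 (d + e)) := by
  intro b hb b' hb' hbb'
  by_cases hpre : t ≤ i + e
  · simp only [extendDec, if_pos hpre]
    split_ifs <;> omega
  · have hsuf : i + e ≤ t := by omega
    simp only [extendDec_of_le hb hsuf, extendDec_of_le hb' hsuf]
    obtain ⟨hb1, hbd⟩ := hb
    obtain ⟨hb'1, hb'd⟩ := hb'
    split_ifs with h₁ h₂ h₂
    · omega
    · omega
    · omega
    · have : S.dec (b - e) (t - (i + e)) ≤ S.dec (b' - e) (t - (i + e)) :=
        S.dec_sorted (t - (i + e)) (by omega) ⟨by omega, by omega⟩ ⟨by omega, by omega⟩ (by omega)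
      omega

lemma extend_cover_of_le {t l : ℕ} (ht : 1 ≤ t) (hpre : t ≤ i + e) (hl : 1 ≤ l)
    (hln : l ≤ e + i + (d + e)) :
    (∃ a ∈ Set.Icc 1 i, S.extendInc a (t - 1) ≤ l ∧ l ≤ S.extendInc a t) ∨
    (∃ b ∈ Set.Icc 1 (d + e), S.extendDec b t ≤ l ∧ l ≤ S.extendDec b (t - 1)) := by
  simp only [extendInc, extendDec, if_pos hpre, if_pos (by omega : t - 1 ≤ i + e)]
  by_cases hcascade : t ≤ i
  · by_cases h₁ : l + t ≤ i
    · exact .inl ⟨l, ⟨hl, by omega⟩, by split_ifs <;> omega⟩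
    by_cases h₂ : l ≤ i + 1 - t + e
    · exact .inl ⟨i + 1 - t, ⟨by omega, by omega⟩, by split_ifs <;> omega⟩
    by_cases h₃ : l ≤ i + e
    · exact .inl ⟨l - e, ⟨by omega, by omega⟩, by split_ifs <;> omega⟩
    · exact .inr ⟨l - i - e, ⟨by omega, by omega⟩, by split_ifs <;> omega⟩
  · by_cases h₁ : l + i < t
    · exact .inr ⟨l, ⟨hl, by omega⟩, by split_ifs <;> omega⟩
    by_cases h₂ : l ≤ e + t
    · exact .inr ⟨t - i, ⟨by omega, by omega⟩, by split_ifs <;> omega⟩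
    · exact .inr ⟨l - i - e, ⟨by omega, by omega⟩, by split_ifs <;> omega⟩

lemma extend_cover_of_lt {t l : ℕ} (hsuf : i + e < t) (htm : t ≤ i + e + m) (hl : 1 ≤ l)
    (hln : l ≤ e + i + (d + e)) :
    (∃ a ∈ Set.Icc 1 i, S.extendInc a (t - 1) ≤ l ∧ l ≤ S.extendInc a t) ∨
    (∃ b ∈ Set.Icc 1 (d + e), S.extendDec b t ≤ l ∧ l ≤ S.extendDec b (t - 1)) := by
  have hprev : t - 1 - (i + e) = t - (i + e) - 1 := by omega
  by_cases hbottom : l ≤ e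
  · have hb : l ∈ Set.Icc 1 (d + e) := ⟨hl, by omega⟩
    refine .inr ⟨l, hb, ?_⟩
    simp only [extendDec_of_le hb hsuf.le, extendDec_of_le hb (by omega : i + e ≤ t - 1),
      if_pos hbottom, le_refl, and_self]
  rcases S.cover (t - (i + e)) (l - e) (by omega) (by omega) (by omega) (by omega) with
    ⟨a, ha, hlo, hhi⟩ | ⟨b, ⟨hb1, hbd⟩, hlo, hhi⟩
  · refine .inl ⟨a, ha, ?_⟩
    rw [extendInc_of_le ha (by omega), extendInc_of_le ha hsuf.le, hprev]
    omega
  · have hb : b + e ∈ Set.Icc 1 (d + e) := ⟨by omega, by omega⟩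
    refine .inr ⟨b + e, hb, ?_⟩
    simp only [extendDec_of_le hb hsuf.le, extendDec_of_le hb (by omega : i + e ≤ t - 1),
      if_neg (by omega : ¬b + e ≤ e), Nat.add_sub_cancel, hprev]
    omega

def extend : SortedFullCovering (i + e + m) (e + i + (d + e)) i (d + e) where
  inc := S.extendInc
  dec := S.extendDec
  inc_zero := fun a ⟨_, hai⟩ => by
    simp only [extendInc, if_pos (Nat.zero_le _), zero_add, if_pos hai]
  inc_last a ha := by
    rw [extendInc_of_le ha (by omega), Nat.add_sub_cancel_left]
    have := S.inc_last a ha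
    omega
  inc_mono a ha := extendInc_mono ha
  inc_sorted t ht := extendInc_sorted ht
  dec_zero := fun b ⟨hb1, _⟩ => by
    simp only [extendDec, if_pos (Nat.zero_le _), if_pos (by omega : 0 < i + b)]
    omega
  dec_last b hb := by
    rw [extendDec_of_le hb (by omega), Nat.add_sub_cancel_left]
    obtain ⟨hb1, hbd⟩ := hb
    split_ifs
    · rfl
    · rw [S.dec_last (b - e) ⟨by omega, by omega⟩]
      omega
  dec_anti b hb := extendDec_anti hb
  dec_sorted t ht := extendDec_sorted ht
  cover t l ht htm hl hln :=
    if hpre : t ≤ i + e then extend_cover_of_le ht hpre hl hln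
    else extend_cover_of_lt (not_le.1 hpre) htm hl hln

end Extend

theorem nonempty_of_one_le (e i d : ℕ) (he : 1 ≤ e) :
    Nonempty (SortedFullCovering (i + d + i * d / e) (e + i + d) i d) := by
  induction hN : e + i + d using Nat.strong_induction_on generalizing e i d with
  | _ N ih =>
  subst hN
  have hdiv_add (x y : ℕ) : x * (y + e) / e = x * y / e + x := by
    rw [mul_add, Nat.add_mul_div_right _ _ he]
  by_cases hd : e ≤ d
  · obtain ⟨d, rfl⟩ := Nat.exists_eq_add_of_le' hd
    obtain ⟨S⟩ := ih (e + i + d) (by omega) e i d he rfl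
    rw [hdiv_add, show i + (d + e) + (i * d / e + i) = i + e + (i + d + i * d / e) by ring]
    exact ⟨S.extend⟩
  by_cases hi : e ≤ i
  · obtain ⟨i, rfl⟩ := Nat.exists_eq_add_of_le' hi
    obtain ⟨S⟩ := ih (e + d + i) (by omega) e d i he rfl
    rw [mul_comm, hdiv_add, show i + e + d + (d * i / e + d) = d + e + (d + i + d * i / e) by ring,
      show e + (i + e) + d = e + d + (i + e) by ring]
    exact ⟨S.extend.reflect⟩
  obtain ⟨M, hM, ⟨S⟩⟩ :
      ∃ M, e + i + d ≤ M ∧ Nonempty (SortedFullCovering M (i * d / e + i + d) i d) := by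
    rcases Nat.eq_zero_or_pos (i * d / e) with hq | hq
    · rw [hq, zero_add]
      exact ⟨e + i + d, le_rfl, ⟨noSlack (by omega)⟩⟩
    · have hqe : i * d / e < e :=
        (Nat.div_lt_iff_lt_mul (by omega)).2 (Nat.mul_lt_mul'' (by omega) (by omega))
      have hle : e ≤ i * d / (i * d / e) :=
        (Nat.le_div_iff_mul_le hq).2 (by rw [mul_comm]; exact Nat.div_mul_le_self _ _)
      exact ⟨_, by omega, ih _ (by omega) _ i d hq rfl⟩
  rw [show i + d + i * d / e = i * d / e + i + d by ring]
  exact ⟨S.transpose hM (by omega)⟩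

end SortedFullCovering

/-- For `e ≥ 1`, the rectangle of width `i + d + ⌊id/e⌋` and height `e + i + d`
admits an `(i,d)`-covering. -/
theorem stmt14 (e i d : ℕ) (he : 1 ≤ e) :
    ∃ (F : Fin i → MonoPoly (i + d + i * d / e) (e + i + d))
      (G : Fin d → MonoPoly (i + d + i * d / e) (e + i + d)),
      IsIDCovering (i + d + i * d / e) (e + i + d) i d F G := by
  obtain ⟨S⟩ := SortedFullCovering.nonempty_of_one_le e i d he
  exact S.exists_isIDCovering (Nat.le_add_right _ _)
end
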